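/- Let A be a probability group and let a, b ∈ A with b = a⁻¹. Then p(a·a = a) = p(a·b = b). -/

import Mathlib

/-- A probability group (Harrison): a set `A` with a distinguished element `one`,
an inverse map `inv`, and a probability map `p` satisfying axioms (1)-(6). -/
structure ProbabilityGroup (A : Type*) where
  /-- the probability map: `p a b c` is `p(a·b = c)` -/
  p : A → A → A → ℝ
  /-- the unit element -/
  one : A
  /-- the inverse map -/
  inv : A → A
  p_nonneg : ∀ a b c, 0 ≤ p a b c
  finite_support : ∀ a b, {c | p a b c ≠ 0}.Finite
  sum_eq_one : ∀ a b, ∑ᶠ c, p a b c = 1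
  assoc : ∀ a b c d, ∑ᶠ x, p a b x * p x c d = ∑ᶠ y, p a y d * p b c y
  one_mul : ∀ a, p one a a = 1
  mul_one : ∀ a, p a one a = 1
  inv_pos : ∀ a, 0 < p a (inv a) one
  inv_unique : ∀ a b, 0 < p a b one → b = inv a
  p_inv : ∀ a b c, p a b c = p (inv b) (inv a) (inv c)
  inv_symm : ∀ a, p a (inv a) one = p (inv a) a one

/-- The size `s(a) = 1 / p(a·a⁻¹ = 1)` of an element of a probability group. -/
noncomputable def ProbabilityGroup.s {A : Type*} (P : ProbabilityGroup A) (a : A) : ℝ :=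
  1 / P.p a (P.inv a) P.one

/-! Expand associativity for `(a·a)·a⁻¹ = 1 = a·(a·a⁻¹)`. Since `p(x·y = 1) > 0` forces
`y = x⁻¹`, a single term survives on each side, leaving
`p(a·a = a) p(a·a⁻¹ = 1) = p(a·a⁻¹ = 1) p(a·a⁻¹ = a⁻¹)`; cancel `p(a·a⁻¹ = 1) > 0`. -/

namespace ProbabilityGroup

variable {A : Type*} (P : ProbabilityGroup A)

theorem eq_inv_of_p_ne_zero {a b : A} (h : P.p a b P.one ≠ 0) : b = P.inv a :=
  P.inv_unique a b ((P.p_nonneg a b P.one).lt_of_ne' h)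

theorem inv_inv (a : A) : P.inv (P.inv a) = a :=
  (P.inv_unique (P.inv a) a (P.inv_symm a ▸ P.inv_pos a)).symm

theorem inv_injective : Function.Injective P.inv :=
  Function.LeftInverse.injective P.inv_inv

theorem eq_of_p_inv_ne_zero {a x : A} (h : P.p x (P.inv a) P.one ≠ 0) : x = a :=
  P.inv_injective (P.eq_inv_of_p_ne_zero h).symm

theorem finsum_mul_p_inv_one (a : A) (f : A → ℝ) :
    ∑ᶠ x, f x * P.p x (P.inv a) P.one = f a * P.p a (P.inv a) P.one :=
  finsum_eq_single _ a fun _ hx =>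
    mul_eq_zero_of_right _ (by_contra fun h => hx (P.eq_of_p_inv_ne_zero h))

theorem finsum_p_one_mul (a : A) (f : A → ℝ) :
    ∑ᶠ y, P.p a y P.one * f y = P.p a (P.inv a) P.one * f (P.inv a) :=
  finsum_eq_single _ (P.inv a) fun _ hy =>
    mul_eq_zero_of_left (by_contra fun h => hy (P.eq_inv_of_p_ne_zero h)) _

end ProbabilityGroup

/-- If `b = a⁻¹` in a probability group, then `p(a·a = a) = p(a·b = b)`. -/
theorem probabilityGroup_inv_identity₁ {A : Type*} (P : ProbabilityGroup A) (a b : A)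
    (hb : b = P.inv a) :
    P.p a a a = P.p a b b := by
  subst hb
  have hassoc := P.assoc a a (P.inv a) P.one
  rw [P.finsum_mul_p_inv_one, P.finsum_p_one_mul, mul_comm (P.p a (P.inv a) P.one)] at hassoc
  exact mul_right_cancel₀ (P.inv_pos a).ne' hassoc
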